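/- In the right-mutation setting (𝒟 ⊆ 𝒞 satisfying (RCP), ℋ_𝒟 = CoCone(𝒟,𝒞), 𝒞' = ℋ_𝒟 ∩ 𝒟^⊥¹), the functor F' : ℋ_𝒟/𝒞' → (ℋ/𝒞)_{S_𝒜} is dense: every object of the localization (ℋ/𝒞)_{S_𝒜} is isomorphic to F'(Y) for some Y ∈ ℋ_𝒟. -/

import Mathlib

open CategoryTheory Category Limits ZeroObject

universe v u

namespace CotorsionPaper

variable {B : Type u} [Category.{v} B] [Abelian B]

/-- `f, g` form a short exact sequence `0 → X → Y → Z → 0`. -/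
def IsSES {X Y Z : B} (f : X ⟶ Y) (g : Y ⟶ Z) : Prop :=
  ∃ w : f ≫ g = 0, (ShortComplex.mk f g w).ShortExact

/-- `Ext¹(X, Y) = 0`: every short exact sequence `0 → Y → E → X → 0` splits. -/
def Ext1Zero (X Y : B) : Prop :=
  ∀ ⦃E : B⦄ (i : Y ⟶ E) (p : E ⟶ X), IsSES i p → ∃ s : X ⟶ E, s ≫ p = 𝟙 X

/-- `Ext²(X, Y) = 0`, via dimension shifting: `Ext¹(K, Y) = 0` for any syzygy `K` of `X`. -/
def Ext2Zero (X Y : B) : Prop :=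
  ∀ ⦃K P : B⦄ (i : K ⟶ P) (p : P ⟶ X), Projective P → IsSES i p → Ext1Zero K Y

/-- A (strictly) full additive subcategory: closed under isomorphisms,
contains a zero object and is closed under finite direct sums. -/
structure AddSubcat (S : Set B) : Prop where
  zero_mem : (0 : B) ∈ S
  iso_closed : ∀ ⦃X Y : B⦄, (X ≅ Y) → X ∈ S → Y ∈ S
  sum_closed : ∀ ⦃X Y : B⦄, X ∈ S → Y ∈ S → (X ⊞ Y) ∈ S

/-- `S` is closed under direct summands (retracts). -/
def ClosedUnderSummands (S : Set B) : Prop :=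
  ∀ ⦃X Y : B⦄ (r : X ⟶ Y) (s : Y ⟶ X), s ≫ r = 𝟙 Y → X ∈ S → Y ∈ S

/-- `S` is rigid: `Ext¹(X, Y) = 0` for all `X, Y ∈ S`. -/
def Rigid (S : Set B) : Prop :=
  ∀ ⦃X⦄, X ∈ S → ∀ ⦃Y⦄, Y ∈ S → Ext1Zero X Y

/-- `S^⊥¹`. -/
def rightPerp (S : Set B) : Set B := {Y | ∀ ⦃X⦄, X ∈ S → Ext1Zero X Y}

/-- `^⊥¹S`. -/
def leftPerp (S : Set B) : Set B := {X | ∀ ⦃Y⦄, Y ∈ S → Ext1Zero X Y}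

/-- `f : X ⟶ A` is a right `S`-approximation of `A`. -/
def IsRightApprox (S : Set B) {X A : B} (f : X ⟶ A) : Prop :=
  X ∈ S ∧ ∀ ⦃X' : B⦄, X' ∈ S → ∀ g : X' ⟶ A, ∃ h : X' ⟶ X, h ≫ f = g

def ContravariantlyFinite (S : Set B) : Prop :=
  ∀ A : B, ∃ (X : B) (f : X ⟶ A), IsRightApprox S f

/-- `f : A ⟶ X` is a left `S`-approximation of `A`. -/
def IsLeftApprox (S : Set B) {A X : B} (f : A ⟶ X) : Prop :=
  X ∈ S ∧ ∀ ⦃X' : B⦄, X' ∈ S → ∀ g : A ⟶ X', ∃ h : X ⟶ X', f ≫ h = g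

def CovariantlyFinite (S : Set B) : Prop :=
  ∀ A : B, ∃ (X : B) (f : A ⟶ X), IsLeftApprox S f

/-- `(U, V)` is a cotorsion pair. -/
structure CotorsionPair (U V : Set B) : Prop where
  summands_left : ClosedUnderSummands U
  summands_right : ClosedUnderSummands V
  ext : ∀ ⦃X⦄, X ∈ U → ∀ ⦃Y⦄, Y ∈ V → Ext1Zero X Y
  resol : ∀ X : B, ∃ (VX UX : B) (i : VX ⟶ UX) (p : UX ⟶ X),
    VX ∈ V ∧ UX ∈ U ∧ IsSES i p
  coresol : ∀ X : B, ∃ (VX UX : B) (i : X ⟶ VX) (p : VX ⟶ UX),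
    VX ∈ V ∧ UX ∈ U ∧ IsSES i p

/-- `CoCone(S, T)`. -/
def CoCone (S T : Set B) : Set B :=
  {X | ∃ (B' B'' : B) (i : X ⟶ B') (p : B' ⟶ B''), B' ∈ S ∧ B'' ∈ T ∧ IsSES i p}

/-- `Cone(S, T)`. -/
def Cone (S T : Set B) : Set B :=
  {X | ∃ (B' B'' : B) (i : B' ⟶ B'') (p : B'' ⟶ X), B' ∈ S ∧ B'' ∈ T ∧ IsSES i p}

/-- The subcategory `𝒫` of projective objects. -/
def projSet : Set B := {P | Projective P}

/-- The subcategory `ℐ` of injective objects. -/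
def injSet : Set B := {I | Injective I}

/-- `Ω𝒞`, the (first) syzygy of `𝒞`. -/
def Syz (C : Set B) : Set B := CoCone projSet C

/-- Condition (RCP): `𝒫 ⊆ 𝒞`, `𝒞` rigid, contravariantly finite,
closed under direct summands (and a full additive subcategory). -/
structure RCP (C : Set B) : Prop where
  add : AddSubcat C
  proj_mem : ∀ ⦃P : B⦄, Projective P → P ∈ C
  rigid : Rigid C
  contra : ContravariantlyFinite C
  summands : ClosedUnderSummands C

/-- `f` factors through an object of `S`. -/
def FactorsThru (S : Set B) {X Y : B} (f : X ⟶ Y) : Prop :=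
  ∃ (Z : B) (g : X ⟶ Z) (h : Z ⟶ Y), Z ∈ S ∧ g ≫ h = f

/-- The ideal of morphisms of the full subcategory on `H` factoring through an object of `S`. -/
def idealRel (H S : Set B) : HomRel (ObjectProperty.FullSubcategory (show ObjectProperty B from H)) :=
  fun X Y f g => FactorsThru S (show X.obj ⟶ Y.obj from f.hom - g.hom)

/-- The ideal quotient `H/S`. -/
abbrev HeartCat (H S : Set B) := CategoryTheory.Quotient (idealRel H S)

/-- The quotient functor `H → H/S`. -/
abbrev heartQ (H S : Set B) : ObjectProperty.FullSubcategory (show ObjectProperty B from H) ⥤ HeartCat H S :=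
  CategoryTheory.Quotient.functor _

/-- The zero morphism in the ideal quotient `H/S`. -/
def heartZero (H S : Set B) (X Y : HeartCat H S) : X ⟶ Y :=
  (heartQ H S).map (0 : X.as ⟶ Y.as)

/-- `κ` is a kernel of `φ` in the ideal quotient `H/S`. -/
structure IsKernelArrow {H S : Set B} {K X Y : HeartCat H S}
    (κ : K ⟶ X) (φ : X ⟶ Y) : Prop where
  w : κ ≫ φ = heartZero H S K Y
  lift : ∀ ⦃T : HeartCat H S⦄ (t : T ⟶ X), t ≫ φ = heartZero H S T Y →
    ∃! u : T ⟶ K, u ≫ κ = t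

/-- `π` is a cokernel of `φ` in the ideal quotient `H/S`. -/
structure IsCokernelArrow {H S : Set B} {X Y Q : HeartCat H S}
    (φ : X ⟶ Y) (π : Y ⟶ Q) : Prop where
  w : φ ≫ π = heartZero H S X Q
  desc : ∀ ⦃T : HeartCat H S⦄ (t : Y ⟶ T), φ ≫ t = heartZero H S X T →
    ∃! u : Q ⟶ T, π ≫ u = t

/-- The class of epimorphisms in `H/S` whose kernel object lies in `A`. -/
def epiClassWithKernelIn (H S A : Set B) : MorphismProperty (HeartCat H S) :=
  fun X Y φ => Epi φ ∧ ∃ (K : HeartCat H S) (κ : K ⟶ X),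
    K.as.obj ∈ A ∧ IsKernelArrow κ φ

/-- The class of monomorphisms in `H/S` whose cokernel object lies in `A`. -/
def monoClassWithCokernelIn (H S A : Set B) : MorphismProperty (HeartCat H S) :=
  fun X Y φ => Mono φ ∧ ∃ (Q : HeartCat H S) (π : Y ⟶ Q),
    Q.as.obj ∈ A ∧ IsCokernelArrow φ π

/-- The diagram `(⋄)` associated with a morphism `f : Y ⟶ X`. -/
structure DiamondDiagram {Y X : B} (f : Y ⟶ X) {OmX PX Z₁ IY SgY Z₂ : B}
    (q : OmX ⟶ PX) (p : PX ⟶ X) (j : OmX ⟶ Z₁) (g : Z₁ ⟶ Y)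
    (i : Y ⟶ IY) (c : IY ⟶ SgY) (h : X ⟶ Z₂) (e : Z₂ ⟶ SgY)
    (u : Z₁ ⟶ PX) (v : IY ⟶ Z₂) : Prop where
  projPX : Projective PX
  injIY : Injective IY
  ses_proj : IsSES q p
  ses_pullback : IsSES j g
  ses_inj : IsSES i c
  ses_pushout : IsSES h e
  comm₁ : j ≫ u = q
  comm₂ : u ≫ p = g ≫ f
  comm₃ : f ≫ h = i ≫ v
  comm₄ : v ≫ e = c

/-- The class of morphisms `f : Y ⟶ X` admitting a diagram `(⋄)` with
`Z₁ ∈ ZCond` and `h` factoring through an object of `HCond`. -/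
def Rclass (ZCond HCond : Set B) : MorphismProperty B :=
  fun Y X f => ∃ (OmX PX Z₁ IY SgY Z₂ : B) (q : OmX ⟶ PX) (p : PX ⟶ X)
    (j : OmX ⟶ Z₁) (g : Z₁ ⟶ Y) (i : Y ⟶ IY) (c : IY ⟶ SgY)
    (h : X ⟶ Z₂) (e : Z₂ ⟶ SgY) (u : Z₁ ⟶ PX) (v : IY ⟶ Z₂),
    DiamondDiagram f q p j g i c h e u v ∧ Z₁ ∈ ZCond ∧ FactorsThru HCond h

/-- The class of morphisms `f : Y ⟶ X` admitting a diagram `(⋄)` with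
`g` factoring through an object of `GCond` and `h` through an object of `HCond`. -/
def RtildeClass (GCond HCond : Set B) : MorphismProperty B :=
  fun Y X f => ∃ (OmX PX Z₁ IY SgY Z₂ : B) (q : OmX ⟶ PX) (p : PX ⟶ X)
    (j : OmX ⟶ Z₁) (g : Z₁ ⟶ Y) (i : Y ⟶ IY) (c : IY ⟶ SgY)
    (h : X ⟶ Z₂) (e : Z₂ ⟶ SgY) (u : Z₁ ⟶ PX) (v : IY ⟶ Z₂),
    DiamondDiagram f q p j g i c h e u v ∧ FactorsThru GCond g ∧ FactorsThru HCond h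

/-- The objects of the heart `ℋ` of a cotorsion pair `(U, V)`. -/
def HeartObjects (U V : Set B) : Set B :=
  {X | (∃ (VX UX : B) (i : VX ⟶ UX) (p : UX ⟶ X),
          IsSES i p ∧ VX ∈ V ∧ UX ∈ U ∩ V) ∧
       (∃ (VX UX : B) (i : X ⟶ VX) (p : VX ⟶ UX),
          IsSES i p ∧ VX ∈ U ∩ V ∧ UX ∈ U)}

end CotorsionPaper

/-!
An object `X` of `ℋ` sits in a short exact sequence `0 → X → C₀ → C₁ → 0` with `C₀, C₁ ∈ 𝒞`.
Pulling it back along an epic right `𝒟`-approximation `d : D₀ ⟶ C₀` gives `Y` with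
`0 → Y → D₀ → C₁ → 0`, so `Y ∈ CoCone(𝒟, 𝒞)`, together with an epimorphism `Y ⟶ X`. This map
stays epic in `ℋ/𝒞`, and its kernel there is the pullback `K` of `Y ⟶ X` along an epic right
`𝒞`-approximation `X' ⟶ X`. Since `K` is also the kernel of `D₀ ⊞ X' ⟶ C₀`, Wakamatsu's lemma
puts `K` in `𝒟^⊥¹`. So `Y ⟶ X` lies in `S_𝒜`, and `X ≅ F'(Y)` in the localization.
-/

namespace CotorsionPaper

variable {B : Type u} [Category.{v} B]

namespace FactorsThru

variable {S : Set B} {W X Y Z : B}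

lemma comp_left {f : X ⟶ Y} (hf : FactorsThru S f) (g : W ⟶ X) : FactorsThru S (g ≫ f) := by
  obtain ⟨Z, a, b, hZ, rfl⟩ := hf
  exact ⟨Z, g ≫ a, b, hZ, assoc _ _ _⟩

lemma comp_right {f : X ⟶ Y} (hf : FactorsThru S f) (g : Y ⟶ Z) : FactorsThru S (f ≫ g) := by
  obtain ⟨Z, a, b, hZ, rfl⟩ := hf
  exact ⟨Z, a, b ≫ g, hZ, (assoc _ _ _).symm⟩

end FactorsThru

variable [Abelian B]

namespace IsSES

variable {X Y Z : B} {f : X ⟶ Y} {g : Y ⟶ Z}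

lemma comp_eq_zero (h : IsSES f g) : f ≫ g = 0 := h.1

lemma shortExact (h : IsSES f g) : (ShortComplex.mk f g h.comp_eq_zero).ShortExact := h.2

lemma mono (h : IsSES f g) : Mono f := h.shortExact.mono_f

lemma epi (h : IsSES f g) : Epi g := h.shortExact.epi_g

lemma exists_lift (h : IsSES f g) {T : B} (t : T ⟶ Y) (ht : t ≫ g = 0) :
    ∃ u : T ⟶ X, u ≫ f = t :=
  have := h.mono
  ⟨h.shortExact.exact.lift t ht, h.shortExact.exact.lift_f t ht⟩

lemma exists_desc (h : IsSES f g) {T : B} (t : Y ⟶ T) (ht : f ≫ t = 0) :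
    ∃ u : Z ⟶ T, g ≫ u = t :=
  have := h.epi
  ⟨h.shortExact.exact.desc t ht, h.shortExact.exact.g_desc t ht⟩

lemma of_lift [Mono f] [Epi g] (w : f ≫ g = 0)
    (hlift : ∀ ⦃T : B⦄ (t : T ⟶ Y), t ≫ g = 0 → ∃ u : T ⟶ X, u ≫ f = t) : IsSES f g :=
  ⟨w, { exact := ShortComplex.exact_of_f_is_kernel _ (KernelFork.IsLimit.ofι' _ w
    fun t ht => ⟨(hlift t ht).choose, (hlift t ht).choose_spec⟩) }⟩

lemma of_desc [Mono f] [Epi g] (w : f ≫ g = 0)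
    (hdesc : ∀ ⦃T : B⦄ (t : Y ⟶ T), f ≫ t = 0 → ∃ u : Z ⟶ T, g ≫ u = t) : IsSES f g :=
  ⟨w, { exact := ShortComplex.exact_of_g_is_cokernel _ (CokernelCofork.IsColimit.ofπ' _ w
    fun t ht => ⟨(hdesc t ht).choose, (hdesc t ht).choose_spec⟩) }⟩

end IsSES

lemma isSES_kernel {X Y : B} (f : X ⟶ Y) [Epi f] : IsSES (kernel.ι f) f :=
  ⟨kernel.condition f, { exact := ShortComplex.exact_of_f_is_kernel _ (kernelIsKernel f) }⟩

lemma Ext1Zero.exists_retraction {X Y E : B} (hXY : Ext1Zero X Y) {i : Y ⟶ E} {p : E ⟶ X}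
    (h : IsSES i p) : ∃ r : E ⟶ Y, i ≫ r = 𝟙 Y := by
  obtain ⟨s, hs⟩ := hXY i p h
  exact ⟨_, (ShortComplex.Splitting.ofExactOfSection _ h.shortExact.exact s hs h.mono).f_r⟩

lemma IsSES.pushout {A E Q M P : B} {i : A ⟶ E} {p : E ⟶ Q} (h : IsSES i p) {f : A ⟶ M}
    {inl : M ⟶ P} {inr : E ⟶ P} (hP : IsPushout f i inl inr) :
    IsSES inl (hP.desc 0 p (by rw [comp_zero, h.comp_eq_zero])) := by
  have := h.mono
  have := h.epi
  have : Mono inl := Abelian.mono_inl_of_isColimit f i hP.isColimit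
  have : Epi (hP.desc 0 p (by rw [comp_zero, h.comp_eq_zero])) := by
    have : Epi (inr ≫ hP.desc 0 p (by rw [comp_zero, h.comp_eq_zero])) := by
      rw [hP.inr_desc]; infer_instance
    exact epi_of_epi inr _
  refine .of_desc (hP.inl_desc _ _ _) fun T t ht => ?_
  obtain ⟨u, hu⟩ := h.exists_desc (inr ≫ t) (by rw [← hP.w_assoc, ht, comp_zero])
  exact ⟨u, hP.hom_ext (by rw [hP.inl_desc_assoc, zero_comp, ht]) (by rw [hP.inr_desc_assoc, hu])⟩

-- The pushout of `0 → A → E → Q → 0` along `f` splits, and a retraction of its first map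
-- restricts to the extension of `f`.
lemma IsSES.exists_extension {A E Q M : B} {i : A ⟶ E} {p : E ⟶ Q} (h : IsSES i p)
    (hQM : Ext1Zero Q M) (f : A ⟶ M) : ∃ f' : E ⟶ M, i ≫ f' = f := by
  have hP := IsPushout.of_hasPushout f i
  obtain ⟨r, hr⟩ := hQM.exists_retraction (h.pushout hP)
  exact ⟨pushout.inr f i ≫ r, by rw [← pushout.condition_assoc, hr, comp_id]⟩

-- Wakamatsu's lemma. Push a given extension `0 → W → E → D → 0` out along `W ⟶ M`: the
-- resulting extension of `D` by `M` splits, and the lifting hypothesis corrects its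
-- splitting into one landing in `E`.
lemma ext1Zero_of_isSES_of_forall_lift {W M Q D : B} {b : W ⟶ M} {q : M ⟶ Q} (h : IsSES b q)
    (hDM : Ext1Zero D M) (hlift : ∀ φ : D ⟶ Q, ∃ l : D ⟶ M, l ≫ q = φ) : Ext1Zero D W := by
  intro E i p hE
  have hP := IsPushout.of_hasPushout b i
  have hM := hE.pushout hP
  have hE' := h.pushout hP.flip
  obtain ⟨σ, hσ⟩ := hDM _ _ hM
  obtain ⟨l, hl⟩ := hlift (σ ≫ hP.flip.desc 0 q (by rw [comp_zero, h.comp_eq_zero]))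
  obtain ⟨τ, hτ⟩ := hE'.exists_lift (σ - l ≫ pushout.inl b i)
    (by rw [Preadditive.sub_comp, assoc, hP.flip.inr_desc, hl, sub_self])
  refine ⟨τ, ?_⟩
  rw [← hP.inr_desc 0 p (by rw [comp_zero, hE.comp_eq_zero]), reassoc_of% hτ,
    Preadditive.sub_comp, assoc, hP.inl_desc]
  simpa using hσ

lemma IsSES.pullback {X C₀ C₁ D₀ Y : B} {i : X ⟶ C₀} {p : C₀ ⟶ C₁} (h : IsSES i p)
    {d : D₀ ⟶ C₀} [Epi d] {fst : Y ⟶ D₀} {snd : Y ⟶ X} (hY : IsPullback fst snd d i) :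
    IsSES fst (d ≫ p) := by
  have := h.mono
  have := h.epi
  have := hY.mono_fst_of_mono
  refine .of_lift (by rw [hY.w_assoc, h.comp_eq_zero, comp_zero]) fun T t ht => ?_
  obtain ⟨u, hu⟩ := h.exists_lift (t ≫ d) (by rw [assoc, ht])
  exact ⟨hY.lift t u hu.symm, hY.lift_fst _ _ _⟩

lemma isSES_biprod_of_isPullback {X₁ X₂ X₃ X₄ : B} {fst : X₁ ⟶ X₂} {snd : X₁ ⟶ X₃}
    {f : X₂ ⟶ X₄} {g : X₃ ⟶ X₄} (h : IsPullback fst snd f g) [Epi f] :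
    IsSES (biprod.lift fst snd) (biprod.desc f (-g)) := by
  have : Epi (biprod.desc f (-g)) := by
    have : Epi (biprod.inl ≫ biprod.desc f (-g)) := by rw [biprod.inl_desc]; infer_instance
    exact epi_of_epi biprod.inl _
  exact ⟨h.shortComplex'.zero,
    { exact := h.exact_shortComplex', mono_f := h.mono_shortComplex'_f, epi_g := this }⟩

-- Adding a projective cover to a right approximation makes it an epimorphism.
lemma RCP.exists_epi_isRightApprox [EnoughProjectives B] {S : Set B} (hS : RCP S) (A : B) :
    ∃ (X : B) (f : X ⟶ A), IsRightApprox S f ∧ Epi f := by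
  obtain ⟨X, f, hX, hf⟩ := hS.contra A
  refine ⟨X ⊞ Projective.over A, biprod.desc f (Projective.π A),
    ⟨hS.add.sum_closed hX (hS.proj_mem (Projective.projective_over A)), fun X' hX' g => ?_⟩, ?_⟩
  · obtain ⟨h, hh⟩ := hf hX' g
    exact ⟨h ≫ biprod.inl, by rw [assoc, biprod.inl_desc, hh]⟩
  · have : Epi (biprod.inr ≫ biprod.desc f (Projective.π A)) := by
      rw [biprod.inr_desc]; infer_instance
    exact epi_of_epi biprod.inr _

lemma ext1Zero_kernel_of_isRightApprox {S : Set B} (hS : Rigid S) {X A : B} {f : X ⟶ A}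
    (hf : IsRightApprox S f) [Epi f] {C : B} (hC : C ∈ S) : Ext1Zero C (kernel f) :=
  ext1Zero_of_isSES_of_forall_lift (isSES_kernel f) (hS hC hf.1) (hf.2 hC)

namespace FactorsThru

variable {S : Set B} {X Y : B}

lemma zero (hS : AddSubcat S) : FactorsThru S (0 : X ⟶ Y) := ⟨0, 0, 0, hS.zero_mem, zero_comp⟩

lemma add (hS : AddSubcat S) {f g : X ⟶ Y} (hf : FactorsThru S f) (hg : FactorsThru S g) :
    FactorsThru S (f + g) := by
  obtain ⟨Z₁, a₁, b₁, h₁, rfl⟩ := hf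
  obtain ⟨Z₂, a₂, b₂, h₂, rfl⟩ := hg
  exact ⟨Z₁ ⊞ Z₂, biprod.lift a₁ a₂, biprod.desc b₁ b₂, hS.sum_closed h₁ h₂, biprod.lift_desc⟩

lemma neg {f : X ⟶ Y} (hf : FactorsThru S f) : FactorsThru S (-f) := by
  obtain ⟨Z, a, b, hZ, rfl⟩ := hf
  exact ⟨Z, -a, b, hZ, Preadditive.neg_comp _ _⟩

end FactorsThru

section Heart

variable {H S : Set B}

lemma idealRel_congruence (hS : AddSubcat S) : Congruence (idealRel H S) where
  equivalence :=
    { refl := fun f => by simpa [idealRel] using FactorsThru.zero hS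
      symm := fun {f g} h => by simpa [idealRel] using h.neg
      trans := fun {f g k} h₁ h₂ => by simpa [idealRel] using h₁.add hS h₂ }
  comp_left f _ _ h := by simpa [idealRel, Preadditive.comp_sub] using h.comp_left f.hom
  comp_right g h := by simpa [idealRel, Preadditive.sub_comp] using h.comp_right g.hom

lemma heartQ_map_eq_iff (hS : AddSubcat S)
    {X Y : ObjectProperty.FullSubcategory (show ObjectProperty B from H)} (f g : X ⟶ Y) :
    (heartQ H S).map f = (heartQ H S).map g ↔ FactorsThru S (f.hom - g.hom) :=
  have := idealRel_congruence (H := H) hS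
  Quotient.functor_map_eq_iff _ f g

lemma heartQ_map_eq_heartZero_iff (hS : AddSubcat S)
    {X Y : ObjectProperty.FullSubcategory (show ObjectProperty B from H)} (f : X ⟶ Y) :
    (heartQ H S).map f = heartZero H S _ _ ↔ FactorsThru S f.hom :=
  (heartQ_map_eq_iff hS f 0).trans (by simp)

lemma epi_heartQ_map_of_factorsThru_comp (hS : AddSubcat S)
    {X Y : ObjectProperty.FullSubcategory (show ObjectProperty B from H)} (g : X ⟶ Y)
    (hg : ∀ ⦃T : B⦄ (t : Y.obj ⟶ T), FactorsThru S (g.hom ≫ t) → FactorsThru S t) :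
    Epi ((heartQ H S).map g) := by
  refine ⟨fun {Z} u₁ u₂ h => ?_⟩
  obtain ⟨Z⟩ := Z
  obtain ⟨u₁, rfl⟩ := (heartQ H S).map_surjective u₁
  obtain ⟨u₂, rfl⟩ := (heartQ H S).map_surjective u₂
  rw [← Functor.map_comp, ← Functor.map_comp, heartQ_map_eq_iff hS] at h
  rw [heartQ_map_eq_iff hS]
  exact hg _ (by simpa [Preadditive.comp_sub] using h)

lemma isKernelArrow_heartQ_map (hS : AddSubcat S)
    {K Y X : ObjectProperty.FullSubcategory (show ObjectProperty B from H)} (κ : K ⟶ Y) (g : Y ⟶ X)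
    (hw : FactorsThru S (κ.hom ≫ g.hom))
    (hlift : ∀ {T : ObjectProperty.FullSubcategory (show ObjectProperty B from H)}
      (t : T.obj ⟶ Y.obj), FactorsThru S (t ≫ g.hom) → ∃ u : T.obj ⟶ K.obj, u ≫ κ.hom = t)
    (huniq : ∀ {T : ObjectProperty.FullSubcategory (show ObjectProperty B from H)}
      (v : T.obj ⟶ K.obj), FactorsThru S (v ≫ κ.hom) → FactorsThru S v) :
    IsKernelArrow ((heartQ H S).map κ) ((heartQ H S).map g) := by
  refine ⟨by rw [← Functor.map_comp]; exact (heartQ_map_eq_heartZero_iff hS _).2 hw,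
    fun T t ht => ?_⟩
  obtain ⟨T⟩ := T
  obtain ⟨t, rfl⟩ := (heartQ H S).map_surjective t
  rw [← Functor.map_comp] at ht
  obtain ⟨u, hu⟩ := hlift t.hom ((heartQ_map_eq_heartZero_iff hS _).1 ht)
  refine ⟨(heartQ H S).map (ObjectProperty.homMk u : T ⟶ K), ?_, fun y hy => ?_⟩
  · exact ((heartQ H S).map_comp _ _).symm.trans (congrArg _ (by ext; exact hu))
  · obtain ⟨y, rfl⟩ := (heartQ H S).map_surjective y
    rw [← Functor.map_comp, heartQ_map_eq_iff hS] at hy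
    rw [heartQ_map_eq_iff hS]
    exact huniq _ (by simpa [Preadditive.sub_comp, hu] using hy)

end Heart

section Chases

variable {S : Set B}

lemma exists_lift_pullbackFst_of_factorsThru {Y X X' T : B} {g : Y ⟶ X} {c : X' ⟶ X}
    (hc : IsRightApprox S c) {t : T ⟶ Y} (ht : FactorsThru S (t ≫ g)) :
    ∃ u : T ⟶ pullback g c, u ≫ pullback.fst g c = t := by
  obtain ⟨Z, a, b, hZ, hab⟩ := ht
  obtain ⟨b', hb'⟩ := hc.2 hZ b
  exact ⟨pullback.lift t (a ≫ b') (by rw [assoc, hb', hab]), pullback.lift_fst _ _ _⟩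

-- `v` differs from a map factoring through `S` by a map `T ⟶ kernel c`, which extends over
-- the inflation `T ⟶ C₀` because `Ext¹(C₁, kernel c) = 0` (Wakamatsu).
lemma factorsThru_of_factorsThru_comp_pullbackFst (hS : AddSubcat S) (hrig : Rigid S)
    {Y X X' T : B} {g : Y ⟶ X} {c : X' ⟶ X} (hc : IsRightApprox S c) [Epi c]
    (hT : T ∈ CoCone S S) {v : T ⟶ pullback g c}
    (hv : FactorsThru S (v ≫ pullback.fst g c)) : FactorsThru S v := by
  obtain ⟨Z, a, b, hZ, hab⟩ := hv
  obtain ⟨b', hb'⟩ := hc.2 hZ (b ≫ g)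
  set β := pullback.lift b b' hb'.symm
  have hw : (v - a ≫ β) ≫ pullback.fst g c = 0 := by
    rw [Preadditive.sub_comp, assoc, pullback.lift_fst, hab, sub_self]
  obtain ⟨w, hw'⟩ := (isSES_kernel c).exists_lift ((v - a ≫ β) ≫ pullback.snd g c)
    (by rw [assoc, ← pullback.condition, ← assoc, hw, zero_comp])
  obtain ⟨C₀, C₁, i, p, hC₀, hC₁, hT⟩ := hT
  obtain ⟨w', hw''⟩ := hT.exists_extension (ext1Zero_kernel_of_isRightApprox hrig hc hC₁) w
  have hdiff : v - a ≫ β = i ≫ w' ≫ pullback.lift 0 (kernel.ι c) (by simp) :=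
    pullback.hom_ext (by rw [hw, assoc, assoc, pullback.lift_fst, comp_zero, comp_zero])
      (by rw [assoc, assoc, pullback.lift_snd, reassoc_of% hw'', hw'])
  rw [← sub_add_cancel v (a ≫ β), hdiff, add_comm]
  exact .add hS ⟨Z, a, β, hZ, rfl⟩ ⟨C₀, i, _, hC₀, rfl⟩

lemma factorsThru_of_factorsThru_pullbackSnd_comp (hrig : Rigid S) {X C₀ C₁ D₀ T : B}
    {i : X ⟶ C₀} {p : C₀ ⟶ C₁} (hX : IsSES i p) (hC₀ : C₀ ∈ S) (hC₁ : C₁ ∈ S)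
    {d : D₀ ⟶ C₀} [Epi d] {t : X ⟶ T} (ht : FactorsThru S (pullback.snd d i ≫ t)) :
    FactorsThru S t := by
  obtain ⟨Z, a, b, hZ, hab⟩ := ht
  obtain ⟨a', ha'⟩ :=
    (hX.pullback (.of_hasPullback d i)).exists_extension (hrig hC₁ hZ) a
  -- `a' ≫ b` kills `kernel d` (it factors through `pullback.snd d i`), so it factors through `d`
  obtain ⟨r, hr⟩ := (isSES_kernel d).exists_desc (a' ≫ b) (by
    rw [← pullback.lift_fst (f := d) (g := i) (kernel.ι d) 0 (by simp), assoc, reassoc_of% ha', hab,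
      pullback.lift_snd_assoc, zero_comp])
  refine ⟨C₀, i, r, hC₀, ?_⟩
  rw [← cancel_epi (pullback.snd d i), ← pullback.condition_assoc, hr, reassoc_of% ha', hab]

end Chases

section RightMutation

variable {C : Set B}

lemma isKernelArrow_heartQ_map_pullbackFst (hC : RCP C)
    {Y X : ObjectProperty.FullSubcategory (show ObjectProperty B from CoCone C C)} (g : Y ⟶ X)
    {X' : B} {c : X' ⟶ X.obj} (hc : IsRightApprox C c) [Epi c]
    (hK : pullback g.hom c ∈ CoCone C C) :
    IsKernelArrow
      ((heartQ (CoCone C C) C).map (ObjectProperty.homMk (pullback.fst g.hom c) : ⟨_, hK⟩ ⟶ Y))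
      ((heartQ (CoCone C C) C).map g) :=
  isKernelArrow_heartQ_map hC.add _ _ ⟨X', _, c, hc.1, pullback.condition.symm⟩
    (fun _ ht => exists_lift_pullbackFst_of_factorsThru hc ht)
    (fun {T} _ hv => factorsThru_of_factorsThru_comp_pullbackFst hC.add hC.rigid hc T.2 hv)

lemma heartQ_map_pullbackSnd_mem_epiClassWithKernelIn [EnoughProjectives B] {D : Set B}
    (hC : RCP C) (hDC : D ⊆ C)
    {X : ObjectProperty.FullSubcategory (show ObjectProperty B from CoCone C C)}
    {C₀ C₁ D₀ : B} {i : X.obj ⟶ C₀} {p : C₀ ⟶ C₁} (hX : IsSES i p) (hC₀ : C₀ ∈ C) (hC₁ : C₁ ∈ C)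
    {d : D₀ ⟶ C₀} (hd : IsRightApprox D d) [Epi d] (hY : pullback d i ∈ CoCone C C) :
    epiClassWithKernelIn (CoCone C C) C (rightPerp D)
      ((heartQ (CoCone C C) C).map (ObjectProperty.homMk (pullback.snd d i) : ⟨_, hY⟩ ⟶ X)) := by
  obtain ⟨X', c, hc, _⟩ := hC.exists_epi_isRightApprox X.obj
  have hK := isSES_biprod_of_isPullback
    ((IsPullback.of_hasPullback (pullback.snd d i) c).paste_horiz (.of_hasPullback d i))
  have hsum : (D₀ ⊞ X') ∈ C := hC.add.sum_closed (hDC hd.1) hc.1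
  refine ⟨epi_heartQ_map_of_factorsThru_comp hC.add _ fun _ _ ht =>
      factorsThru_of_factorsThru_pullbackSnd_comp hC.rigid hX hC₀ hC₁ ht,
    _, _, fun D' hD' => ?_,
    isKernelArrow_heartQ_map_pullbackFst hC _ hc ⟨_, _, _, _, hsum, hC₀, hK⟩⟩
  refine ext1Zero_of_isSES_of_forall_lift hK (hC.rigid (hDC hD') hsum) fun φ => ?_
  obtain ⟨l, hl⟩ := hd.2 hD' φ
  exact ⟨l ≫ biprod.inl, by rw [assoc, biprod.inl_desc, hl]⟩

end RightMutation

theorem statement_10_general {B : Type u} [Category.{v} B] [Abelian B]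
    [EnoughProjectives B]
    (C D : Set B) (hC : RCP C) (hD : RCP D) (hDC : D ⊆ C) :
    ∀ T : (epiClassWithKernelIn (CoCone C C) C (rightPerp D)).Localization,
      ∃ (Y : B) (hY : Y ∈ CoCone D C) (hY' : Y ∈ CoCone C C),
        Nonempty (T ≅ (epiClassWithKernelIn (CoCone C C) C (rightPerp D)).Q.obj
          ((heartQ (CoCone C C) C).obj ⟨Y, hY'⟩)) := by
  intro T
  obtain ⟨C₀, C₁, i, p, hC₀, hC₁, hX⟩ := T.as.obj.as.property
  obtain ⟨D₀, d, hd, _⟩ := hD.exists_epi_isRightApprox C₀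
  have hY := hX.pullback (IsPullback.of_hasPullback d i)
  have hYC : pullback d i ∈ CoCone C C := ⟨D₀, C₁, _, _, hDC hd.1, hC₁, hY⟩
  exact ⟨pullback d i, ⟨D₀, C₁, _, _, hd.1, hC₁, hY⟩, hYC, ⟨(Localization.Construction.wIso _
    (heartQ_map_pullbackSnd_mem_epiClassWithKernelIn hC hDC hX hC₀ hC₁ hd hYC)).symm⟩⟩

/-- the functor `F' : ℋ_𝒟/𝒞' → (ℋ/𝒞)_{S_𝒜}` is dense. -/
theorem statement_10 {B : Type u} [Category.{v} B] [Abelian B]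
    [EnoughProjectives B] [EnoughInjectives B]
    (C D : Set B) (hC : RCP C) (hD : RCP D) (hDC : D ⊆ C) :
    ∀ T : (epiClassWithKernelIn (CoCone C C) C (rightPerp D)).Localization,
      ∃ (Y : B) (hY : Y ∈ CoCone D C) (hY' : Y ∈ CoCone C C),
        Nonempty (T ≅ (epiClassWithKernelIn (CoCone C C) C (rightPerp D)).Q.obj
          ((heartQ (CoCone C C) C).obj ⟨Y, hY'⟩)) :=
  statement_10_general C D hC hD hDC

end CotorsionPaper
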